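/- Multistage f-Set Cover rounding gives feasibility: suppose for each time t ∈ {1,...,T} and each element c, the fractional solution satisfies ∑_{i : c ∈ S_i^t} x_i^t ≥ 1, where each element c belongs to at most f sets at each time. If ỹ_i = RS(x_i, 1/f, 1/(2f)) for each set index i, then for each time t and each element c there exists i with c ∈ S_i^t and ỹ_i^t = 1. -/

import Mathlib

/- The two-threshold rounding scheme `RS`.  Given a time horizon `T`, a sequence
`x : ℕ → ℝ` (indices `0, …, T-1`) of values in `[0,1]` and thresholds `α ≥ β`,
it produces a `{0,1}`-valued sequence `y`:
* if `x t ≥ α` then `y t = 1`;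
* if `x t ≤ β` then `y t = 0`;
* on a maximal interval `[t₁,t₂]` with `β < x < α` throughout, `y = 1` iff both
  (`t₁ = 0` or `x (t₁-1) ≥ α`) and (`t₂ = T-1` or `x (t₂+1) ≥ α`);
  this is expressed below by saying that the nearest non-strict index on each
  side (within the horizon), when it exists, carries a value `≥ α`. -/
open Classical in
noncomputable def RS (T : ℕ) (x : ℕ → ℝ) (α β : ℝ) (t : ℕ) : ℝ :=
  if α ≤ x t then 1
  else if x t ≤ β then 0
  else if ((∀ s, s ≤ t → β < x s ∧ x s < α) ∨
           (∃ s, s < t ∧ α ≤ x s ∧ ∀ u, s < u → u ≤ t → β < x u ∧ x u < α)) ∧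
          ((∀ s, t ≤ s → s < T → β < x s ∧ x s < α) ∨
           (∃ s, t < s ∧ s < T ∧ α ≤ x s ∧ ∀ u, t ≤ u → u < s → β < x u ∧ x u < α))
  then 1 else 0

theorem RS_eq_one_of_le {T : ℕ} {x : ℕ → ℝ} {α β : ℝ} {t : ℕ} (h : α ≤ x t) :
    RS T x α β t = 1 := by
  rw [RS, if_pos h]

theorem Finset.exists_one_div_le_of_one_le_sum {K ι : Type*} [Field K] [LinearOrder K]
    [IsStrictOrderedRing K] {s : Finset ι} {a : ι → K} {n : ℕ} (hcard : s.card ≤ n)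
    (hsum : 1 ≤ ∑ i ∈ s, a i) : ∃ i ∈ s, 1 / (n : K) ≤ a i := by
  have hne : s.Nonempty := by
    by_contra hempty
    rw [Finset.not_nonempty_iff_eq_empty.mp hempty, Finset.sum_empty] at hsum
    exact absurd hsum (by norm_num)
  have hn : (0 : K) < n := by exact_mod_cast hne.card_pos.trans_le hcard
  refine Finset.exists_le_of_sum_le hne ?_
  calc ∑ _i ∈ s, 1 / (n : K) = s.card / n := by simp [div_eq_mul_inv]
    _ ≤ 1 := (div_le_one hn).mpr (by exact_mod_cast hcard)
    _ ≤ ∑ i ∈ s, a i := hsum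

open Classical in
theorem stmt_5_general (m T f : ℕ) (C : Type*)
    (mem : Fin m → ℕ → C → Prop)   -- `mem i t c` means `c ∈ S_i^t`
    (x : Fin m → ℕ → ℝ)
    (hfreq : ∀ t, t < T → ∀ c : C,
      (Finset.univ.filter (fun i => mem i t c)).card ≤ f)
    (hcover : ∀ t, t < T → ∀ c : C,
      1 ≤ ∑ i ∈ Finset.univ.filter (fun i => mem i t c), x i t) :
    ∀ t, t < T → ∀ c : C,
      ∃ i, mem i t c ∧ RS T (x i) (1 / f) (1 / (2 * f)) t = 1 := by
  intro t ht c
  obtain ⟨i, hi, hlarge⟩ :=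
    Finset.exists_one_div_le_of_one_le_sum (hfreq t ht c) (hcover t ht c)
  exact ⟨i, (Finset.mem_filter.mp hi).2, RS_eq_one_of_le hlarge⟩

open Classical in
/-- multistage `f`-Set Cover rounding feasibility.  If at every
time `t < T` every element `c` is fractionally covered
(`∑_{i : c ∈ S_i^t} x_i^t ≥ 1`) by at most `f` sets, then rounding each
sequence `x_i` with `RS(·, 1/f, 1/(2f))` yields, for every time and element,
a chosen set containing it. -/
theorem stmt_5 (m T f : ℕ) (hf : 1 ≤ f) (C : Type*)
    (mem : Fin m → ℕ → C → Prop)   -- `mem i t c` means `c ∈ S_i^t`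
    (x : Fin m → ℕ → ℝ)
    (hx : ∀ i t, t < T → 0 ≤ x i t ∧ x i t ≤ 1)
    (hfreq : ∀ t, t < T → ∀ c : C,
      (Finset.univ.filter (fun i => mem i t c)).card ≤ f)
    (hcover : ∀ t, t < T → ∀ c : C,
      1 ≤ ∑ i ∈ Finset.univ.filter (fun i => mem i t c), x i t) :
    ∀ t, t < T → ∀ c : C,
      ∃ i, mem i t c ∧ RS T (x i) (1 / f) (1 / (2 * f)) t = 1 :=
  stmt_5_general m T f C mem x hfreq hcover
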